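/- For any nonzero x ∈ ℝ^N with all entries nonzero and positive weights w, min(x) > 0 implies ⊗^∧(w, x) > 0, and min(x) < 0 implies ⊗^∧(w, x) < 0 (soundness of the weighted conjunction robustness). -/

import Mathlib

/-!
On a positive entry `xᵢ` the `i`-th term of `otimes` is `(1 - w̄ᵢ) xᵢ`, on a negative one it is
`w̄ᵢ xᵢ`; since `0 < w̄ᵢ < 1` once there are at least two positive weights, every term is a
positive multiple of `xᵢ`, and a minimum of such rescalings has the sign of the minimum of `x`.
-/

noncomputable def otimes (N : ℕ) (hN : 0 < N) (w x : Fin N → ℝ) : ℝ :=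
  Finset.univ.inf' ⟨⟨0, hN⟩, Finset.mem_univ _⟩
    (fun i => ((1 / 2 - w i / ∑ j, w j) * Real.sign (x i) + 1 / 2) * x i)

namespace Finset

variable {ι : Type*} {s : Finset ι} (H : s.Nonempty) {c x : ι → ℝ}

theorem inf'_mul_left_pos (hc : ∀ i ∈ s, 0 < c i) (hx : 0 < s.inf' H x) :
    0 < s.inf' H fun i => c i * x i :=
  (lt_inf'_iff H).mpr fun i hi => mul_pos (hc i hi) ((lt_inf'_iff H).mp hx i hi)

theorem inf'_mul_left_neg (hc : ∀ i ∈ s, 0 < c i) (hx : s.inf' H x < 0) :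
    (s.inf' H fun i => c i * x i) < 0 := by
  obtain ⟨i, hi, hxi⟩ := (inf'_lt_iff H).mp hx
  exact (inf'_lt_iff H).mpr ⟨i, hi, mul_neg_of_pos_of_neg (hc i hi) hxi⟩

end Finset

theorem div_sum_lt_one_of_pos {ι : Type*} [Fintype ι] [Nontrivial ι] {w : ι → ℝ}
    (hw : ∀ i, 0 < w i) (i : ι) : w i / ∑ j, w j < 1 := by
  obtain ⟨j, hji⟩ := exists_ne i
  have hsum : w i < ∑ j, w j :=
    Finset.single_lt_sum hji (Finset.mem_univ i) (Finset.mem_univ j) (hw j)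
      fun k _ _ => (hw k).le
  exact (div_lt_one ((hw i).trans hsum)).mpr hsum

theorem half_sub_mul_sign_add_half_pos {a : ℝ} (ha₀ : 0 < a) (ha₁ : a < 1) (y : ℝ) :
    0 < (1 / 2 - a) * Real.sign y + 1 / 2 := by
  rcases Real.sign_apply_eq y with h | h | h <;> rw [h] <;> linarith

theorem otimes_soundness (N : ℕ) (hN : 2 ≤ N) (w x : Fin N → ℝ)
    (hw : ∀ i, 0 < w i) :
    (0 < Finset.univ.inf' ⟨⟨0, by omega⟩, Finset.mem_univ _⟩ x →
        0 < otimes N (by omega) w x) ∧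
      (Finset.univ.inf' ⟨⟨0, by omega⟩, Finset.mem_univ _⟩ x < 0 →
        otimes N (by omega) w x < 0) := by
  have : Nontrivial (Fin N) := Fin.nontrivial_iff_two_le.mpr hN
  have hsum : 0 < ∑ j, w j := Finset.sum_pos (fun i _ => hw i) Finset.univ_nonempty
  have hcoeff : ∀ i ∈ Finset.univ, 0 < (1 / 2 - w i / ∑ j, w j) * Real.sign (x i) + 1 / 2 :=
    fun i _ => half_sub_mul_sign_add_half_pos (div_pos (hw i) hsum) (div_sum_lt_one_of_pos hw i) (x i)
  exact ⟨Finset.inf'_mul_left_pos _ hcoeff, Finset.inf'_mul_left_neg _ hcoeff⟩
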